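/- Let G be an n×n real matrix with positive definite symmetric part, i.e. xᵀGx > 0 for every nonzero x ∈ ℝⁿ. Then det( (G+Gᵀ)/2 ) ≤ det(G) (the Ostrowski–Taussky inequality); equivalently, γ := det(2G)/det(G+Gᵀ) satisfies γ ≥ 1. -/

import Mathlib

/-!
Write `S = (G + Gᵀ)/2` and `K = G - S`, so that `Gᵀ = S - K` and `Kᵀ = -K`. Then
`G S⁻¹ Gᵀ = S + Kᵀ S⁻¹ K`, and adding a positive semidefinite matrix to a positive definite one
does not decrease the determinant, hence `det G ^ 2 / det S ≥ det S`. Since `det G > 0` (the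
determinant does not vanish along the segment from `1` to `G`), this gives `det S ≤ det G`.
-/

open Matrix Set

namespace Matrix

variable {n : Type*} [Fintype n]

theorem posDef_symmPart {G : Matrix n n ℝ} (hG : ∀ x : n → ℝ, x ≠ 0 → 0 < x ⬝ᵥ G *ᵥ x) :
    ((1 / 2 : ℝ) • (G + Gᵀ)).PosDef := by
  refine posDef_iff_dotProduct_mulVec.mpr ⟨?_, fun x hx => ?_⟩
  · simp [IsHermitian, add_comm]
  · rw [star_trivial, smul_mulVec, add_mulVec, dotProduct_smul, dotProduct_add,
      dotProduct_transpose_mulVec, smul_eq_mul, ← two_mul, one_div,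
      inv_mul_cancel_left₀ two_ne_zero]
    exact hG x hx

theorem dotProduct_smul_add_smul_mulVec_pos {A B : Matrix n n ℝ}
    (hA : ∀ x : n → ℝ, x ≠ 0 → 0 < x ⬝ᵥ A *ᵥ x) (hB : ∀ x : n → ℝ, x ≠ 0 → 0 < x ⬝ᵥ B *ᵥ x)
    {a b : ℝ} (ha : 0 ≤ a) (hb : 0 ≤ b) (hab : a + b = 1) {x : n → ℝ} (hx : x ≠ 0) :
    0 < x ⬝ᵥ (a • A + b • B) *ᵥ x := by
  rw [add_mulVec, smul_mulVec, smul_mulVec, dotProduct_add, dotProduct_smul, dotProduct_smul]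
  exact convex_Ioi (0 : ℝ) (hA x hx) (hB x hx) ha hb hab

variable [DecidableEq n]

theorem det_ne_zero_of_forall_dotProduct_mulVec_pos {M : Matrix n n ℝ}
    (hM : ∀ x : n → ℝ, x ≠ 0 → 0 < x ⬝ᵥ M *ᵥ x) : M.det ≠ 0 := by
  intro hdet
  obtain ⟨v, hv, hMv⟩ := exists_mulVec_eq_zero_iff.mpr hdet
  simpa [hMv] using hM v hv

theorem det_pos_of_forall_dotProduct_mulVec_pos {M : Matrix n n ℝ}
    (hM : ∀ x : n → ℝ, x ≠ 0 → 0 < x ⬝ᵥ M *ᵥ x) : 0 < M.det := by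
  by_contra! hdet
  have hcont : Continuous fun t : ℝ => ((1 - t) • (1 : Matrix n n ℝ) + t • M).det := by
    fun_prop
  obtain ⟨t, ⟨ht₀, ht₁⟩, hzero⟩ := intermediate_value_Icc' zero_le_one hcont.continuousOn
    (show (0 : ℝ) ∈ Icc _ _ by simpa using hdet)
  have hone : ∀ x : n → ℝ, x ≠ 0 → 0 < x ⬝ᵥ (1 : Matrix n n ℝ) *ᵥ x := fun x hx => by
    simpa using dotProduct_star_self_pos_iff.mpr hx
  exact det_ne_zero_of_forall_dotProduct_mulVec_pos
    (fun x hx => dotProduct_smul_add_smul_mulVec_pos hone hM (sub_nonneg.mpr ht₁) ht₀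
      (sub_add_cancel 1 t) hx) hzero

theorem det_unitary_mul_mul_star {R : Type*} [CommRing R] [StarRing R]
    (U : unitary (Matrix n n R)) (M : Matrix n n R) :
    ((U : Matrix n n R) * M * star (U : Matrix n n R)).det = M.det := by
  rw [det_mul, det_mul, mul_right_comm, ← det_mul, Unitary.mul_star_self_of_mem U.2, det_one,
    one_mul]

theorem PosSemidef.one_le_det_one_add {Q : Matrix n n ℝ} (hQ : Q.PosSemidef) :
    1 ≤ (1 + Q).det := by
  have hspectral : 1 + Q = Unitary.conjStarAlgAut ℝ _ hQ.1.eigenvectorUnitary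
      (1 + diagonal (RCLike.ofReal ∘ hQ.1.eigenvalues)) := by
    rw [map_add, map_one, ← hQ.1.spectral_theorem]
  rw [hspectral, Unitary.conjStarAlgAut_apply, det_unitary_mul_mul_star, ← diagonal_one,
    diagonal_add, det_diagonal]
  exact Finset.one_le_prod fun i _ => by simpa using hQ.eigenvalues_nonneg i

open scoped MatrixOrder in
theorem PosDef.det_le_det_add {A B : Matrix n n ℝ} (hA : A.PosDef) (hB : B.PosSemidef) :
    A.det ≤ (A + B).det := by
  obtain ⟨C, rfl⟩ := CStarAlgebra.nonneg_iff_eq_star_mul_self.mp hB.nonneg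
  have : Invertible A := hA.isUnit.invertible
  have hPSD : (C * A⁻¹ * Cᴴ).PosSemidef := hA.inv.posSemidef.mul_mul_conjTranspose_same C
  calc A.det = A.det * 1 := (mul_one _).symm
    _ ≤ A.det * (1 + C * A⁻¹ * Cᴴ).det := by
      gcongr
      exacts [hA.det_pos.le, hPSD.one_le_det_one_add]
    _ = (A + star C * C).det := by
      rw [Matrix.mul_assoc, det_one_add_mul_comm, ← det_mul, Matrix.mul_add, Matrix.mul_one,
        ← Matrix.mul_assoc, ← Matrix.mul_assoc, mul_inv_of_invertible, Matrix.one_mul,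
        star_eq_conjTranspose]

theorem add_mul_inv_mul_sub {R : Type*} [CommRing R] (S K : Matrix n n R) [Invertible S] :
    (S + K) * S⁻¹ * (S - K) = S - K * S⁻¹ * K := by
  simp only [Matrix.add_mul, Matrix.mul_sub, mul_inv_of_invertible, Matrix.one_mul,
    inv_mul_cancel_right_of_invertible]
  abel

theorem det_symmPart_le_det {G : Matrix n n ℝ} (hG : ∀ x : n → ℝ, x ≠ 0 → 0 < x ⬝ᵥ G *ᵥ x) :
    ((1 / 2 : ℝ) • (G + Gᵀ)).det ≤ G.det := by
  set S := (1 / 2 : ℝ) • (G + Gᵀ) with hS_def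
  set K := G - S
  have hS : S.PosDef := posDef_symmPart hG
  have : Invertible S := hS.isUnit.invertible
  have hG_eq : G = S + K := (add_sub_cancel S G).symm
  have hGt_eq : Gᵀ = S - K := by
    simp only [K, hS_def]
    module
  have hKt : Kᵀ = -K := by
    rw [transpose_sub, hGt_eq, ← conjTranspose_eq_transpose_of_trivial, hS.isHermitian.eq]
    abel
  have hconj : G * S⁻¹ * Gᵀ = S + Kᵀ * S⁻¹ * K := by
    rw [hKt, Matrix.neg_mul, Matrix.neg_mul, ← sub_eq_add_neg, hGt_eq]
    nth_rw 1 [hG_eq]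
    exact add_mul_inv_mul_sub S K
  have hle : S.det ≤ G.det * S.det⁻¹ * G.det := by
    have := hS.det_le_det_add (hS.inv.posSemidef.conjTranspose_mul_mul_same K)
    rwa [conjTranspose_eq_transpose_of_trivial, ← hconj, det_mul, det_mul, det_transpose,
      det_nonsing_inv, Ring.inverse_eq_inv] at this
  have hS_det := hS.det_pos
  refine (mul_self_le_mul_self_iff hS_det.le (det_pos_of_forall_dotProduct_mulVec_pos hG).le).mpr ?_
  calc S.det * S.det ≤ S.det * (G.det * S.det⁻¹ * G.det) := by gcongr
    _ = G.det * G.det := by field_simp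

end Matrix

/-- **Ostrowski–Taussky inequality.** If `G` has positive definite symmetric part
(`xᵀGx > 0` for every nonzero `x`), then `det((G+Gᵀ)/2) ≤ det(G)`; equivalently
`γ := det(2G)/det(G+Gᵀ) ≥ 1`. -/
theorem ostrowski_taussky {n : ℕ} (G : Matrix (Fin n) (Fin n) ℝ)
    (hpd : ∀ x : Fin n → ℝ, x ≠ 0 → 0 < x ⬝ᵥ G.mulVec x) :
    ((1 / 2 : ℝ) • (G + Gᵀ)).det ≤ G.det ∧
    1 ≤ ((2 : ℝ) • G).det / (G + Gᵀ).det := by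
  have hle := det_symmPart_le_det hpd
  have hS_det := (posDef_symmPart hpd).det_pos
  refine ⟨hle, ?_⟩
  have hsum : G + Gᵀ = (2 : ℝ) • ((1 / 2 : ℝ) • (G + Gᵀ)) := by module
  rw [hsum, det_smul, det_smul, mul_div_mul_left _ _ (by positivity)]
  exact (one_le_div hS_det).mpr hle
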